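/- arXiv:1403.3178 — 2 statements merged into one kernel-verified Lean document; each statement's English description precedes it below -/
import Mathlib

section
/- Let H be a finite-dimensional complex Hilbert space with distinguished unit vector φ₀ and P = |φ₀⟩⟨φ₀|, E_P = P ⊗ 1 + 1 ⊗ P − P ⊗ P. Let Ψ ∈ H ⊗ H be a unit vector that is antisymmetric (i.e., SΨ = −Ψ where S is the swap operator). If E_P Ψ = Ψ, then there exists a unit vector Υ ∈ H orthogonal to φ₀ such that Ψ = (1/√2)(φ₀ ⊗ Υ − Υ ⊗ φ₀). -/
/-
View `Ψ` as an antisymmetric matrix `X`. The equation `E_P Ψ = Ψ` reads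
`X = X Pᵀ + P X - P X Pᵀ`. For `P = φ₀ φ₀*` the last term is a multiple of the quadratic form of
`X` at `conj φ₀`, which vanishes by antisymmetry, and the other two terms are rank one:
`X = a φ₀ᵀ - φ₀ aᵀ` with `a = X (conj φ₀)`. The same quadratic form gives `a ⊥ φ₀`, so
`‖Ψ‖² = 2 ‖a‖²` and `Υ = √2 a` works.
-/

open Matrix Kronecker

/-- Rank-one operator `|φ⟩⟨φ|` on `ℂ^n`. -/
noncomputable def proj {n : ℕ} (φ : Fin n → ℂ) : Matrix (Fin n) (Fin n) ℂ :=
  vecMulVec φ (star φ)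

/-- Elementary tensor of two vectors. -/
def tp {n : ℕ} (x y : Fin n → ℂ) : Fin n × Fin n → ℂ := fun p => x p.1 * y p.2

namespace Matrix

variable {n R : Type*} [Fintype n] [CommRing R] {X : Matrix n n R}

theorem vecMul_eq_neg_mulVec_of_transpose_eq_neg (hX : Xᵀ = -X) (v : n → R) :
    v ᵥ* X = -(X *ᵥ v) := by
  rw [← mulVec_transpose, hX, neg_mulVec]

theorem vecMul_dotProduct_self_eq_zero_of_transpose_eq_neg [NoZeroDivisors R] [CharZero R]
    (hX : Xᵀ = -X) (v : n → R) : v ᵥ* X ⬝ᵥ v = 0 := by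
  rw [← CharZero.eq_neg_self_iff]
  conv_lhs => rw [vecMul_eq_neg_mulVec_of_transpose_eq_neg hX, neg_dotProduct, dotProduct_comm,
    dotProduct_mulVec]

theorem eq_vecMulVec_sub_of_transpose_eq_neg [NoZeroDivisors R] [CharZero R]
    (hX : Xᵀ = -X) (φ ψ : n → R)
    (h : X * vecMulVec ψ φ + vecMulVec φ ψ * X - vecMulVec φ ψ * X * vecMulVec ψ φ = X) :
    X = vecMulVec (X *ᵥ ψ) φ - vecMulVec φ (X *ᵥ ψ) := by
  conv_lhs => rw [← h]
  rw [vecMulVec_mul, mul_vecMulVec, vecMulVec_mul, vecMul_vecMulVec,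
    vecMul_dotProduct_self_eq_zero_of_transpose_eq_neg hX, zero_smul, vecMulVec_zero,
    vecMul_eq_neg_mulVec_of_transpose_eq_neg hX, vecMulVec_neg, sub_zero, sub_eq_add_neg]

theorem kronecker_one_add_one_kronecker_sub_kronecker_mulVec_vec [DecidableEq n]
    (P X : Matrix n n R) :
    (P ⊗ₖ 1 + 1 ⊗ₖ P - P ⊗ₖ P) *ᵥ vec X = vec (X * Pᵀ + P * X - P * X * Pᵀ) := by
  simp only [sub_mulVec, add_mulVec, kronecker_mulVec_vec, transpose_one, Matrix.mul_one,
    Matrix.one_mul, vec_add, vec_sub]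

end Matrix

section Tensor

variable {n : ℕ}

theorem vec_vecMulVec (x y : Fin n → ℂ) : vec (vecMulVec x y) = tp y x := by
  ext ⟨i, j⟩
  exact mul_comm _ _

theorem star_tp_dotProduct_tp (x y u v : Fin n → ℂ) :
    star (tp x y) ⬝ᵥ tp u v = (star x ⬝ᵥ u) * (star y ⬝ᵥ v) := by
  simp only [dotProduct, Fintype.sum_prod_type, Finset.sum_mul_sum, tp, Pi.star_apply, star_mul']
  exact Finset.sum_congr rfl fun _ _ => Finset.sum_congr rfl fun _ _ => by ring

theorem star_dotProduct_self_tp_sub_tp (x y : Fin n → ℂ) :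
    star (tp x y - tp y x) ⬝ᵥ (tp x y - tp y x) =
      2 * ((star x ⬝ᵥ x) * (star y ⬝ᵥ y) - (star x ⬝ᵥ y) * (star y ⬝ᵥ x)) := by
  simp only [star_sub, sub_dotProduct, dotProduct_sub, star_tp_dotProduct_tp]
  ring

theorem tp_smul_right {S : Type*} [SMul S ℂ] [SMulCommClass S ℂ ℂ] (c : S) (x y : Fin n → ℂ) :
    tp x (c • y) = c • tp x y := by
  ext p
  exact mul_smul_comm c (x p.1) (y p.2)

theorem tp_smul_left {S : Type*} [SMul S ℂ] [IsScalarTower S ℂ ℂ] (c : S) (x y : Fin n → ℂ) :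
    tp (c • x) y = c • tp x y := by
  ext p
  exact smul_mul_assoc c (x p.1) (y p.2)

end Tensor

theorem stmt8 {n : ℕ} (φ₀ : Fin n → ℂ) (hφ₀ : star φ₀ ⬝ᵥ φ₀ = 1)
    (Ψ : Fin n × Fin n → ℂ) (hΨ : star Ψ ⬝ᵥ Ψ = 1)
    (hanti : ∀ p : Fin n × Fin n, Ψ (p.2, p.1) = -Ψ p)
    (hfix :
      (proj φ₀ ⊗ₖ (1 : Matrix (Fin n) (Fin n) ℂ)
        + (1 : Matrix (Fin n) (Fin n) ℂ) ⊗ₖ proj φ₀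
        - proj φ₀ ⊗ₖ proj φ₀) *ᵥ Ψ = Ψ) :
    ∃ Υ : Fin n → ℂ, star Υ ⬝ᵥ Υ = 1 ∧ star φ₀ ⬝ᵥ Υ = 0 ∧
      Ψ = (Real.sqrt 2)⁻¹ • (tp φ₀ Υ - tp Υ φ₀) := by
  -- `Ψ (i, j) = X j i`
  obtain ⟨X, rfl⟩ := vec_bijective.surjective Ψ
  have hX : Xᵀ = -X := by
    ext i j
    exact hanti (j, i)
  rw [kronecker_one_add_one_kronecker_sub_kronecker_mulVec_vec, vec_inj, proj,
    transpose_vecMulVec] at hfix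
  set a := X *ᵥ star φ₀
  have hΨa : vec X = tp φ₀ a - tp a φ₀ := by
    rw [eq_vecMulVec_sub_of_transpose_eq_neg hX _ _ hfix, vec_sub, vec_vecMulVec, vec_vecMulVec]
  have horth : star φ₀ ⬝ᵥ a = 0 := by
    rw [dotProduct_mulVec, vecMul_dotProduct_self_eq_zero_of_transpose_eq_neg hX]
  have horth' : star a ⬝ᵥ φ₀ = 0 := by
    rw [star_dotProduct, horth, star_zero]
  have hnorm : star a ⬝ᵥ a = 2⁻¹ := by
    rw [hΨa, star_dotProduct_self_tp_sub_tp, hφ₀, horth, horth'] at hΨ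
    linear_combination hΨ / 2
  refine ⟨Real.sqrt 2 • a, ?_, ?_, ?_⟩
  · rw [star_smul, star_trivial, smul_dotProduct, dotProduct_smul, hnorm, smul_smul,
      Real.mul_self_sqrt zero_le_two]
    norm_num [Complex.real_smul]
  · rw [dotProduct_smul, horth, smul_zero]
  · rw [hΨa, tp_smul_left, tp_smul_right, ← smul_sub, inv_smul_smul₀ (by positivity)]
end

section
/- Let H be a finite-dimensional complex Hilbert space with unit vector φ₀, P = |φ₀⟩⟨φ₀|, and E_P = P ⊗ 1 + 1 ⊗ P − P ⊗ P. Let Ψ ∈ H ⊗ H be a unit vector that is symmetric (SΨ = Ψ with S the swap). If E_P Ψ = Ψ, then there exist a vector Θ ∈ H and a scalar λ > 0 such that Ψ = λ (φ₀ ⊗ Θ + Θ ⊗ φ₀). -/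
open Matrix Kronecker

theorem stmt9 {n : ℕ} (φ₀ : Fin n → ℂ) (hφ₀ : star φ₀ ⬝ᵥ φ₀ = 1)
    (Ψ : Fin n × Fin n → ℂ) (hΨ : star Ψ ⬝ᵥ Ψ = 1)
    (hsymm : ∀ p : Fin n × Fin n, Ψ (p.2, p.1) = Ψ p)
    (hfix :
      (proj φ₀ ⊗ₖ (1 : Matrix (Fin n) (Fin n) ℂ)
        + (1 : Matrix (Fin n) (Fin n) ℂ) ⊗ₖ proj φ₀
        - proj φ₀ ⊗ₖ proj φ₀) *ᵥ Ψ = Ψ) :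
    ∃ (Θ : Fin n → ℂ) (lam : ℝ), 0 < lam ∧ Ψ = lam • (tp φ₀ Θ + tp Θ φ₀) := by
  set θ : Fin n → ℂ := fun i => ∑ k, (starRingEnd ℂ) (φ₀ k) * Ψ (k, i) with hθ
  set c : ℂ := ∑ l, (starRingEnd ℂ) (φ₀ l) * θ l with hc
  have key : ∀ i j, Ψ (i, j) = φ₀ i * θ j + θ i * φ₀ j - c * (φ₀ i * φ₀ j) := by
    intro i j
    have h := congrFun hfix (i, j)
    simp only [mulVec, dotProduct, proj, vecMulVec_apply, Matrix.one_apply,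
      Fintype.sum_prod_type, Matrix.sub_apply, Matrix.add_apply, kroneckerMap_apply,
      Pi.star_apply, RCLike.star_def, mul_ite, mul_one, mul_zero] at h
    simp only [sub_mul, add_mul, ite_mul, zero_mul, Finset.sum_sub_distrib,
      Finset.sum_add_distrib, Finset.sum_ite_eq, Finset.mem_univ, if_true, one_mul] at h
    have e1 : ∑ x, φ₀ i * (starRingEnd ℂ) (φ₀ x) * Ψ (x, j) = φ₀ i * θ j := by
      simp only [hθ, Finset.mul_sum]
      exact Finset.sum_congr rfl fun x _ => by ring
    have e2 : (∑ x, ∑ x_1, if i = x then φ₀ j * (starRingEnd ℂ) (φ₀ x_1) * Ψ (x, x_1) else 0)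
        = θ i * φ₀ j := by
      rw [Finset.sum_comm]
      simp only [Finset.sum_ite_eq, Finset.mem_univ, if_true]
      simp only [hθ, Finset.sum_mul]
      exact Finset.sum_congr rfl fun k _ => by rw [← hsymm (i, k)]; ring
    have e3 : (∑ x, ∑ x_1,
        φ₀ i * (starRingEnd ℂ) (φ₀ x) * (φ₀ j * (starRingEnd ℂ) (φ₀ x_1)) * Ψ (x, x_1))
        = c * (φ₀ i * φ₀ j) := by
      rw [Finset.sum_comm, hc, Finset.sum_mul]
      refine Finset.sum_congr rfl fun l _ => ?_
      simp only [hθ, Finset.mul_sum, Finset.sum_mul]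
      exact Finset.sum_congr rfl fun k _ => by ring
    rw [e1, e2, e3] at h
    exact h.symm
  refine ⟨fun k => θ k - c / 2 * φ₀ k, 1, one_pos, ?_⟩
  funext p
  obtain ⟨i, j⟩ := p
  simp only [Pi.smul_apply, Pi.add_apply, tp, one_smul]
  rw [key i j]
  ring
end
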